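/- Let β ∈ ℝ, let I ⊆ ℝ be an interval, and let λ : I → (0, ∞) and b : I → ℝ be differentiable functions satisfying λ'(s) = −b(s)·λ(s) and b'(s) = −b(s)² + β·λ(s) for all s ∈ I. Then the function s ↦ b(s)²/λ(s)² − 2β/λ(s) is constant on I. -/

import Mathlib

open Real Set

/-- Conserved quantity of the approximate blow-up system: if on an interval `I`
the positive function `lam` and the function `b` satisfy `lam' = −b·lam` and
`b' = −b² + β·lam`, then `b²/lam² − 2β/lam` is constant on `I`. -/
theorem conserved_quantity (β : ℝ) (I : Set ℝ) (hI : I.OrdConnected)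
    (lam b : ℝ → ℝ) (hpos : ∀ s ∈ I, 0 < lam s)
    (hlam : ∀ s ∈ I, HasDerivWithinAt lam (-(b s) * lam s) I s)
    (hb : ∀ s ∈ I, HasDerivWithinAt b (-(b s) ^ 2 + β * lam s) I s) :
    ∀ s ∈ I, ∀ t ∈ I,
      (b s) ^ 2 / (lam s) ^ 2 - 2 * β / lam s
        = (b t) ^ 2 / (lam t) ^ 2 - 2 * β / lam t := by
  set E : ℝ → ℝ := fun s => (b s) ^ 2 / (lam s) ^ 2 - 2 * β / lam s with hE
  have hconv : Convex ℝ I := hI.convex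
  have hderiv : ∀ s ∈ I, HasDerivWithinAt E 0 I s := by
    intro s hs
    have hlne : lam s ≠ 0 := (hpos s hs).ne'
    have h1 : HasDerivWithinAt (fun s => (b s) ^ 2 / (lam s) ^ 2)
        (((2 * b s ^ 1 * (-(b s) ^ 2 + β * lam s)) * lam s ^ 2 -
          b s ^ 2 * (2 * lam s ^ 1 * (-(b s) * lam s))) / (lam s ^ 2) ^ 2) I s :=
      ((hb s hs).pow 2).div ((hlam s hs).pow 2) (pow_ne_zero 2 hlne)
    have h2 : HasDerivWithinAt (fun s => 2 * β / lam s)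
        ((0 * lam s - 2 * β * (-(b s) * lam s)) / lam s ^ 2) I s :=
      (hasDerivWithinAt_const s I (2 * β)).div (hlam s hs) hlne
    have := h1.sub h2
    convert this using 1
    case e'_9 =>
      field_simp
      ring
    all_goals rfl
  intro s hs t ht
  have key := hconv.norm_image_sub_le_of_norm_hasDerivWithin_le
    (f' := fun _ => (0 : ℝ)) (C := 0) hderiv (fun x _ => by simp) hs ht
  simp only [norm_zero, zero_mul] at key
  have : ‖E t - E s‖ ≤ 0 := by simpa using key
  have : E t = E s := by
    have := norm_le_zero_iff.mp this
    linarith [sub_eq_zero.mp this]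
  simp [hE] at this ⊢
  linarith
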